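/- arXiv:1909.13680 — 2 statements merged into one kernel-verified Lean document; each statement's English description precedes it below -/
import Mathlib

section
/- Fix real numbers a < b, α ∈ (0,1), β ∈ [0,1], and set γ = α + β(1−α). Let f : (a,b]×ℝ → ℝ be such that t ↦ f(t, z(t)) belongs to C_{1−γ}[a,b] for every z ∈ C_{1−γ}[a,b], and let c, d, e ∈ ℝ with d ≠ 0 and 1 + c/d ≠ 0. Then for all z₁, z₂ ∈ C_{1−γ}[a,b], ‖Tz₁ − Tz₂‖_{C_{1−γ}} ≤ [ |1/(1+c/d)|·(b−a)^α/Γ(α+1) + Γ(γ)·(b−a)^α/Γ(α+γ) ]·‖f(·, z₁(·)) − f(·, z₂(·))‖_{C_{1−γ}}. -/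
open intervalIntegral MeasureTheory

/-- Membership in the weighted space `C_w[a,b]`: `g : (a,b] → ℝ` is such that
`t ↦ (t−a)^w g(t)` extends to a continuous function on `[a,b]`. -/
def memCw (a b w : ℝ) (g : ℝ → ℝ) : Prop :=
  ∃ G : ℝ → ℝ, ContinuousOn G (Set.Icc a b) ∧
    ∀ t ∈ Set.Ioc a b, G t = (t - a) ^ w * g t

/-- Weighted sup-norm on `C_w[a,b]`: `‖g‖ = sup_{t∈(a,b]} (t−a)^w |g(t)|`. -/
noncomputable def wnorm (a b w : ℝ) (g : ℝ → ℝ) : ℝ :=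
  sSup ((fun t => (t - a) ^ w * |g t|) '' Set.Ioc a b)

/-- The operator `T` associated with the Hilfer boundary value problem. -/
noncomputable def hilferT (a b α γ c d e : ℝ) (f : ℝ → ℝ → ℝ) (z : ℝ → ℝ) (t : ℝ) : ℝ :=
  (t - a) ^ (γ - 1) / Real.Gamma γ * (e / (d * (1 + c / d))) -
    (1 / (1 + c / d)) * ((t - a) ^ (γ - 1) / Real.Gamma γ) *
      ((1 / Real.Gamma (1 - γ + α)) * ∫ s in a..b, (b - s) ^ (α - γ) * f s (z s)) +
    (1 / Real.Gamma α) * ∫ s in a..t, (t - s) ^ (α - 1) * f s (z s)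

lemma rbeta01 {u v : ℝ} (hu : 0 < u) (hv : 0 < v) :
    ∫ x in (0:ℝ)..1, x ^ (u-1) * (1-x) ^ (v-1)
      = Real.Gamma u * Real.Gamma v / Real.Gamma (u+v) := by
  have h := Complex.Gamma_mul_Gamma_eq_betaIntegral (s := (u:ℂ)) (t := (v:ℂ))
    (by simpa using hu) (by simpa using hv)
  have hbeta : Complex.betaIntegral (u:ℂ) (v:ℂ)
      = ((∫ x in (0:ℝ)..1, x ^ (u-1) * (1-x) ^ (v-1) : ℝ) : ℂ) := by
    rw [Complex.betaIntegral, ← intervalIntegral.integral_ofReal]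
    refine intervalIntegral.integral_congr fun x hx => ?_
    rw [Set.uIcc_of_le (by norm_num : (0:ℝ) ≤ 1)] at hx
    have h0 : (0:ℝ) ≤ x := hx.1
    have h1 : (0:ℝ) ≤ 1 - x := by linarith [hx.2]
    show (x:ℂ) ^ ((u:ℂ) - 1) * (1 - (x:ℂ)) ^ ((v:ℂ) - 1)
        = ((x ^ (u-1) * (1-x) ^ (v-1) : ℝ) : ℂ)
    rw [show ((u:ℂ) - 1) = ((u - 1 : ℝ) : ℂ) by push_cast; ring,
        show ((v:ℂ) - 1) = ((v - 1 : ℝ) : ℂ) by push_cast; ring,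
        show (1 - (x:ℂ)) = ((1 - x : ℝ) : ℂ) by push_cast; ring,
        ← Complex.ofReal_cpow h0, ← Complex.ofReal_cpow h1, ← Complex.ofReal_mul]
  rw [hbeta, show ((u:ℂ) + (v:ℂ)) = ((u + v : ℝ) : ℂ) by push_cast; ring,
      Complex.Gamma_ofReal, Complex.Gamma_ofReal, Complex.Gamma_ofReal,
      ← Complex.ofReal_mul, ← Complex.ofReal_mul] at h
  have h' : Real.Gamma u * Real.Gamma v
      = Real.Gamma (u+v) * ∫ x in (0:ℝ)..1, x ^ (u-1) * (1-x) ^ (v-1) := by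
    exact_mod_cast h
  have hne : Real.Gamma (u+v) ≠ 0 := (Real.Gamma_pos_of_pos (by linarith)).ne'
  field_simp
  linarith [h']

lemma rbeta {p q : ℝ} (hp : -1 < p) (hq : -1 < q) {a t : ℝ} (hat : a < t) :
    ∫ s in a..t, (t - s) ^ p * (s - a) ^ q
      = (t - a) ^ (p+q+1) * (Real.Gamma (p+1) * Real.Gamma (q+1) / Real.Gamma (p+q+2)) := by
  have hT : 0 < t - a := sub_pos.2 hat
  have h1 : ∫ s in a..t, (t - s) ^ p * (s - a) ^ q
      = ∫ y in (0:ℝ)..(t-a), (t - a - y) ^ p * y ^ q := by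
    have h := intervalIntegral.integral_comp_add_right (a := 0) (b := t - a)
      (fun s => (t - s) ^ p * (s - a) ^ q) a
    rw [zero_add, sub_add_cancel] at h
    rw [← h]
    refine intervalIntegral.integral_congr fun y _ => ?_
    rw [show t - (y + a) = t - a - y by ring, show y + a - a = y by ring]
  have h2 : (t - a) • ∫ x in (0:ℝ)..1, (t - a - (t-a) * x) ^ p * ((t-a) * x) ^ q
      = ∫ y in (0:ℝ)..(t-a), (t - a - y) ^ p * y ^ q := by
    have h := intervalIntegral.smul_integral_comp_mul_left (a := 0) (b := 1)
      (fun y => (t - a - y) ^ p * y ^ q) (t - a)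
    rwa [mul_zero, mul_one] at h
  have h3 : ∫ x in (0:ℝ)..1, (t - a - (t-a) * x) ^ p * ((t-a) * x) ^ q
      = ∫ x in (0:ℝ)..1, ((t-a) ^ p * (t-a) ^ q) * (x ^ (q+1-1) * (1-x) ^ (p+1-1)) := by
    refine intervalIntegral.integral_congr fun x hx => ?_
    rw [Set.uIcc_of_le (by norm_num : (0:ℝ) ≤ 1)] at hx
    rw [show t - a - (t-a) * x = (t-a) * (1-x) by ring,
        Real.mul_rpow hT.le (by linarith [hx.2] : (0:ℝ) ≤ 1 - x),
        Real.mul_rpow hT.le hx.1, add_sub_cancel_right, add_sub_cancel_right]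
    ring
  rw [h1, ← h2, h3, intervalIntegral.integral_const_mul,
      rbeta01 (by linarith : (0:ℝ) < q + 1) (by linarith : (0:ℝ) < p + 1),
      smul_eq_mul, show q + 1 + (p + 1) = p + q + 2 by ring,
      show (t-a) ^ (p+q+1) = (t-a) ^ p * (t-a) ^ q * (t-a) by
        rw [show p + q + 1 = (p + q) + 1 from rfl, Real.rpow_add hT, Real.rpow_add hT,
          Real.rpow_one]]
  ring

lemma rbeta_integrable {p q : ℝ} (hp : -1 < p) (hq : -1 < q) {a t : ℝ} (hat : a ≤ t) :
    IntervalIntegrable (fun s => (t - s) ^ p * (s - a) ^ q) volume a t := by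
  rcases eq_or_lt_of_le hat with rfl | hat'
  · exact IntervalIntegrable.refl
  set m := (a + t) / 2 with hm
  have ham : a < m := by simp only [hm]; linarith
  have hmt : m < t := by simp only [hm]; linarith
  have left : IntervalIntegrable (fun s => (t - s) ^ p * (s - a) ^ q) volume a m := by
    have hint : IntervalIntegrable (fun s => (s - a) ^ q) volume a m := by
      have := (intervalIntegral.intervalIntegrable_rpow' (a := 0) (b := m - a) hq).comp_sub_right a
      simpa using this
    have hcont : ContinuousOn (fun s => (t - s) ^ p) (Set.uIcc a m) := by
      rw [Set.uIcc_of_le ham.le]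
      apply ContinuousOn.rpow_const (by fun_prop)
      intro x hx
      left
      have h1 : x ≤ m := hx.2
      have h2 : 0 < t - x := by linarith
      exact h2.ne'
    exact hint.continuousOn_mul hcont
  have right : IntervalIntegrable (fun s => (t - s) ^ p * (s - a) ^ q) volume m t := by
    have hint : IntervalIntegrable (fun s => (t - s) ^ p) volume m t := by
      have := (intervalIntegral.intervalIntegrable_rpow' (a := t - m) (b := 0) hp).comp_sub_left t
      simpa using this
    have hcont : ContinuousOn (fun s => (s - a) ^ q) (Set.uIcc m t) := by
      rw [Set.uIcc_of_le hmt.le]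
      apply ContinuousOn.rpow_const (by fun_prop)
      intro x hx
      left
      have h1 : m ≤ x := hx.1
      have h2 : 0 < x - a := by linarith
      exact h2.ne'
    have := hint.continuousOn_mul hcont
    simpa [mul_comm] using this
  exact left.trans right

lemma key_int {a b t p γ : ℝ} (ht : t ∈ Set.Ioc a b) (hp : -1 < p) (hγ : 0 < γ)
    {g : ℝ → ℝ} (hg : memCw a b (1 - γ) g) :
    IntervalIntegrable (fun s => (t - s) ^ p * g s) volume a t := by
  obtain ⟨G, hGc, hGeq⟩ := hg
  have hint : IntervalIntegrable (fun s => G s * ((t - s) ^ p * (s - a) ^ (γ - 1)))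
      volume a t := by
    refine (rbeta_integrable hp (by linarith) ht.1.le).continuousOn_mul ?_
    rw [Set.uIcc_of_le ht.1.le]
    exact hGc.mono (Set.Icc_subset_Icc le_rfl ht.2)
  rw [intervalIntegrable_iff_integrableOn_Ioc_of_le ht.1.le] at hint ⊢
  refine hint.congr_fun (fun s hs => ?_) measurableSet_Ioc
  have hsa : 0 < s - a := sub_pos.2 hs.1
  have hsb : s ∈ Set.Ioc a b := ⟨hs.1, hs.2.trans ht.2⟩
  have h1 : (s - a) ^ (γ - 1) * (s - a) ^ (1 - γ) = 1 := by
    rw [← Real.rpow_add hsa]; norm_num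
  have h2 : (s - a) ^ (γ - 1) * G s = g s := by
    rw [hGeq s hsb, ← mul_assoc, h1, one_mul]
  calc G s * ((t - s) ^ p * (s - a) ^ (γ - 1))
      = (t - s) ^ p * ((s - a) ^ (γ - 1) * G s) := by ring
    _ = (t - s) ^ p * g s := by rw [h2]

lemma key_bound {a b t p γ M : ℝ} (ht : t ∈ Set.Ioc a b) (hp : -1 < p) (hγ : 0 < γ)
    {F : ℝ → ℝ} (hFi : IntervalIntegrable (fun s => (t - s) ^ p * F s) volume a t)
    (hM : ∀ s ∈ Set.Ioc a b, |F s| ≤ M * (s - a) ^ (γ - 1)) :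
    |∫ s in a..t, (t - s) ^ p * F s|
      ≤ M * ((t - a) ^ (p + γ) * (Real.Gamma (p+1) * Real.Gamma γ / Real.Gamma (p + γ + 1))) := by
  have hat : a < t := ht.1
  have hIb : IntervalIntegrable (fun s => M * ((t - s) ^ p * (s - a) ^ (γ - 1))) volume a t :=
    (rbeta_integrable hp (by linarith) hat.le).const_mul M
  have step1 : |∫ s in a..t, (t - s) ^ p * F s| ≤ ∫ s in a..t, |(t - s) ^ p * F s| :=
    intervalIntegral.abs_integral_le_integral_abs hat.le
  have step2 : (∫ s in a..t, |(t - s) ^ p * F s|)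
      ≤ ∫ s in a..t, M * ((t - s) ^ p * (s - a) ^ (γ - 1)) := by
    refine intervalIntegral.integral_mono_ae_restrict hat.le hFi.abs hIb ?_
    rw [Measure.restrict_congr_set Ioc_ae_eq_Icc.symm]
    filter_upwards [ae_restrict_mem measurableSet_Ioc] with s hs
    have hts : 0 ≤ t - s := by linarith [hs.2]
    have hsb : s ∈ Set.Ioc a b := ⟨hs.1, hs.2.trans ht.2⟩
    calc |(t - s) ^ p * F s| = (t - s) ^ p * |F s| := by
          rw [abs_mul, abs_of_nonneg (Real.rpow_nonneg hts p)]
      _ ≤ (t - s) ^ p * (M * (s - a) ^ (γ - 1)) :=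
          mul_le_mul_of_nonneg_left (hM s hsb) (Real.rpow_nonneg hts p)
      _ = M * ((t - s) ^ p * (s - a) ^ (γ - 1)) := by ring
  have step3 : (∫ s in a..t, M * ((t - s) ^ p * (s - a) ^ (γ - 1)))
      = M * ((t - a) ^ (p + γ) * (Real.Gamma (p+1) * Real.Gamma γ / Real.Gamma (p + γ + 1))) := by
    rw [intervalIntegral.integral_const_mul, rbeta hp (by linarith) hat,
        show p + (γ - 1) + 1 = p + γ by ring, show γ - 1 + 1 = γ by ring,
        show p + (γ - 1) + 2 = p + γ + 1 by ring]
  linarith [step1, step2]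

/-- **Continuity estimate for `T` (Step 2 of Theorem 3.2).**  Fix `a < b`,
`α ∈ (0,1)`, `β ∈ [0,1]`, `γ = α + β(1−α)`.  For all
`z₁, z₂ ∈ C_{1−γ}[a,b]`,
`‖Tz₁ − Tz₂‖_{C_{1−γ}} ≤ [|1/(1+c/d)|(b−a)^α/Γ(α+1) + Γ(γ)(b−a)^α/Γ(α+γ)]
  · ‖f(·,z₁(·)) − f(·,z₂(·))‖_{C_{1−γ}}`. -/
theorem T_continuity_estimate (a b α β γ : ℝ) (hab : a < b)
    (hα0 : 0 < α) (hα1 : α < 1) (hβ0 : 0 ≤ β) (hβ1 : β ≤ 1)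
    (hγ : γ = α + β * (1 - α))
    (f : ℝ → ℝ → ℝ)
    (hf : ∀ z : ℝ → ℝ, memCw a b (1 - γ) z → memCw a b (1 - γ) (fun t => f t (z t)))
    (c d e : ℝ) (hd : d ≠ 0) (hcd : 1 + c / d ≠ 0) :
    ∀ z₁ z₂ : ℝ → ℝ, memCw a b (1 - γ) z₁ → memCw a b (1 - γ) z₂ →
      wnorm a b (1 - γ)
          (fun t => hilferT a b α γ c d e f z₁ t - hilferT a b α γ c d e f z₂ t) ≤
        (|1 / (1 + c / d)| * (b - a) ^ α / Real.Gamma (α + 1) +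
            Real.Gamma γ * (b - a) ^ α / Real.Gamma (α + γ)) *
          wnorm a b (1 - γ) (fun t => f t (z₁ t) - f t (z₂ t)) := by
  intro z₁ z₂ hz₁ hz₂
  obtain ⟨G₁, hG₁c, hG₁⟩ := hf z₁ hz₁
  obtain ⟨G₂, hG₂c, hG₂⟩ := hf z₂ hz₂
  have hγ0 : 0 < γ := by nlinarith
  have hγ1 : γ ≤ 1 := by nlinarith
  have hba : 0 < b - a := sub_pos.2 hab
  have hp1 : (-1:ℝ) < α - γ := by linarith
  have hp2 : (-1:ℝ) < α - 1 := by linarith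
  have hΓγ := Real.Gamma_pos_of_pos hγ0
  have hΓα := Real.Gamma_pos_of_pos hα0
  have hΓα1 := Real.Gamma_pos_of_pos (show (0:ℝ) < α + 1 by linarith)
  have hΓαγ := Real.Gamma_pos_of_pos (show (0:ℝ) < α + γ by linarith)
  have hΓ1 := Real.Gamma_pos_of_pos (show (0:ℝ) < 1 - γ + α by linarith)
  have hΓ1' := Real.Gamma_pos_of_pos (show (0:ℝ) < α - γ + 1 by linarith)
  set F : ℝ → ℝ := fun s => f s (z₁ s) - f s (z₂ s) with hF
  set M : ℝ := wnorm a b (1 - γ) F with hMdef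
  have hGsub : ∀ s ∈ Set.Ioc a b, (s - a) ^ (1 - γ) * |F s| = |G₁ s - G₂ s| := by
    intro s hs
    rw [hG₁ s hs, hG₂ s hs, ← mul_sub, abs_mul,
      abs_of_nonneg (Real.rpow_nonneg (by linarith [hs.1] : (0:ℝ) ≤ s - a) _)]
  have hbdd : BddAbove ((fun t => (t - a) ^ (1 - γ) * |F t|) '' Set.Ioc a b) := by
    apply BddAbove.mono ?_
      (isCompact_Icc.image_of_continuousOn ((hG₁c.sub hG₂c).abs)).bddAbove
    rintro x ⟨s, hs, rfl⟩
    exact ⟨s, Set.Ioc_subset_Icc_self hs, (hGsub s hs).symm⟩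
  have hMle : ∀ s ∈ Set.Ioc a b, (s - a) ^ (1 - γ) * |F s| ≤ M := by
    intro s hs
    rw [hMdef]; unfold wnorm
    exact le_csSup hbdd ⟨s, hs, rfl⟩
  have hM0 : 0 ≤ M :=
    le_trans (mul_nonneg (Real.rpow_nonneg hba.le _) (abs_nonneg _)) (hMle b ⟨hab, le_rfl⟩)
  have hMF : ∀ s ∈ Set.Ioc a b, |F s| ≤ M * (s - a) ^ (γ - 1) := by
    intro s hs
    have hsa : 0 < s - a := sub_pos.2 hs.1
    have h1 : (s - a) ^ (γ - 1) * (s - a) ^ (1 - γ) = 1 := by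
      rw [← Real.rpow_add hsa]; norm_num
    calc |F s| = (s - a) ^ (γ - 1) * ((s - a) ^ (1 - γ) * |F s|) := by
          rw [← mul_assoc, h1, one_mul]
      _ ≤ (s - a) ^ (γ - 1) * M :=
          mul_le_mul_of_nonneg_left (hMle s hs) (Real.rpow_nonneg hsa.le _)
      _ = M * (s - a) ^ (γ - 1) := mul_comm _ _
  have hbIoc : b ∈ Set.Ioc a b := ⟨hab, le_rfl⟩
  have I1b : IntervalIntegrable (fun s => (b - s) ^ (α - γ) * f s (z₁ s)) volume a b :=
    key_int hbIoc hp1 hγ0 ⟨G₁, hG₁c, hG₁⟩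
  have I2b : IntervalIntegrable (fun s => (b - s) ^ (α - γ) * f s (z₂ s)) volume a b :=
    key_int hbIoc hp1 hγ0 ⟨G₂, hG₂c, hG₂⟩
  have IFb : IntervalIntegrable (fun s => (b - s) ^ (α - γ) * F s) volume a b := by
    have heq : (fun s => (b - s) ^ (α - γ) * F s)
        = fun s => (b - s) ^ (α - γ) * f s (z₁ s) - (b - s) ^ (α - γ) * f s (z₂ s) := by
      funext s; simp only [hF]; ring
    rw [heq]; exact I1b.sub I2b
  have hb1 : |∫ s in a..b, (b - s) ^ (α - γ) * F s|
      ≤ M * ((b - a) ^ α * (Real.Gamma (α - γ + 1) * Real.Gamma γ / Real.Gamma (α + 1))) := by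
    have h := key_bound hbIoc hp1 hγ0 IFb hMF
    rwa [show α - γ + γ = α by ring] at h
  unfold wnorm
  have hCM : 0 ≤ (|1 / (1 + c / d)| * (b - a) ^ α / Real.Gamma (α + 1) +
      Real.Gamma γ * (b - a) ^ α / Real.Gamma (α + γ)) * M := by
    apply mul_nonneg _ hM0
    have h1 : (0:ℝ) ≤ (b - a) ^ α := Real.rpow_nonneg hba.le _
    have := abs_nonneg (1 / (1 + c / d))
    positivity
  apply Real.sSup_le _ hCM
  rintro x ⟨t, ht, rfl⟩
  dsimp only
  have hta : 0 < t - a := sub_pos.2 ht.1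
  have I1t : IntervalIntegrable (fun s => (t - s) ^ (α - 1) * f s (z₁ s)) volume a t :=
    key_int ht hp2 hγ0 ⟨G₁, hG₁c, hG₁⟩
  have I2t : IntervalIntegrable (fun s => (t - s) ^ (α - 1) * f s (z₂ s)) volume a t :=
    key_int ht hp2 hγ0 ⟨G₂, hG₂c, hG₂⟩
  have IFt : IntervalIntegrable (fun s => (t - s) ^ (α - 1) * F s) volume a t := by
    have heq : (fun s => (t - s) ^ (α - 1) * F s)
        = fun s => (t - s) ^ (α - 1) * f s (z₁ s) - (t - s) ^ (α - 1) * f s (z₂ s) := by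
      funext s; simp only [hF]; ring
    rw [heq]; exact I1t.sub I2t
  have hb2 : |∫ s in a..t, (t - s) ^ (α - 1) * F s|
      ≤ M * ((t - a) ^ (α - 1 + γ) * (Real.Gamma α * Real.Gamma γ / Real.Gamma (α + γ))) := by
    have h := key_bound ht hp2 hγ0 IFt hMF
    rwa [show α - 1 + 1 = α by ring, show α - 1 + γ + 1 = α + γ by ring] at h
  have hsplit_b : (∫ s in a..b, (b - s) ^ (α - γ) * f s (z₁ s))
      - (∫ s in a..b, (b - s) ^ (α - γ) * f s (z₂ s))
      = ∫ s in a..b, (b - s) ^ (α - γ) * F s := by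
    rw [← intervalIntegral.integral_sub I1b I2b]
    refine intervalIntegral.integral_congr fun s _ => ?_
    simp only [hF]; ring
  have hsplit_t : (∫ s in a..t, (t - s) ^ (α - 1) * f s (z₁ s))
      - (∫ s in a..t, (t - s) ^ (α - 1) * f s (z₂ s))
      = ∫ s in a..t, (t - s) ^ (α - 1) * F s := by
    rw [← intervalIntegral.integral_sub I1t I2t]
    refine intervalIntegral.integral_congr fun s _ => ?_
    simp only [hF]; ring
  have hsub : hilferT a b α γ c d e f z₁ t - hilferT a b α γ c d e f z₂ t
      = -((1 / (1 + c / d)) * ((t - a) ^ (γ - 1) / Real.Gamma γ) *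
          ((1 / Real.Gamma (1 - γ + α)) * ∫ s in a..b, (b - s) ^ (α - γ) * F s))
        + (1 / Real.Gamma α) * ∫ s in a..t, (t - s) ^ (α - 1) * F s := by
    simp only [hilferT]
    rw [← hsplit_b, ← hsplit_t]
    ring
  have key1 : (t - a) ^ (1 - γ) * (t - a) ^ (γ - 1) = 1 := by
    rw [← Real.rpow_add hta]; norm_num
  have key2 : (t - a) ^ (1 - γ) * (t - a) ^ (α - 1 + γ) = (t - a) ^ α := by
    rw [← Real.rpow_add hta, show 1 - γ + (α - 1 + γ) = α by ring]
  have key3 : (t - a) ^ α ≤ (b - a) ^ α :=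
    Real.rpow_le_rpow hta.le (by linarith [ht.2]) hα0.le
  set J1 := ∫ s in a..b, (b - s) ^ (α - γ) * F s with hJ1
  set J2 := ∫ s in a..t, (t - s) ^ (α - 1) * F s with hJ2
  calc (t - a) ^ (1 - γ) * |hilferT a b α γ c d e f z₁ t - hilferT a b α γ c d e f z₂ t|
      ≤ (t - a) ^ (1 - γ) *
          (|1 / (1 + c / d)| * ((t - a) ^ (γ - 1) / Real.Gamma γ) *
            ((1 / Real.Gamma (1 - γ + α)) * |J1|)
          + (1 / Real.Gamma α) * |J2|) := by
        refine mul_le_mul_of_nonneg_left ?_ (Real.rpow_nonneg hta.le _)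
        rw [hsub]
        refine (abs_add_le _ _).trans ?_
        rw [abs_neg]
        have e1 : |(1 / (1 + c / d)) * ((t - a) ^ (γ - 1) / Real.Gamma γ) *
            ((1 / Real.Gamma (1 - γ + α)) * J1)|
            = |1 / (1 + c / d)| * ((t - a) ^ (γ - 1) / Real.Gamma γ) *
              ((1 / Real.Gamma (1 - γ + α)) * |J1|) := by
          rw [abs_mul, abs_mul, abs_mul,
            abs_of_nonneg (div_nonneg (Real.rpow_nonneg hta.le _) hΓγ.le),
            abs_of_nonneg (le_of_lt (by positivity : (0:ℝ) < 1 / Real.Gamma (1 - γ + α)))]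
        have e2 : |(1 / Real.Gamma α) * J2| = (1 / Real.Gamma α) * |J2| := by
          rw [abs_mul, abs_of_nonneg (le_of_lt (by positivity : (0:ℝ) < 1 / Real.Gamma α))]
        rw [e1, e2]
    _ ≤ (t - a) ^ (1 - γ) *
          (|1 / (1 + c / d)| * ((t - a) ^ (γ - 1) / Real.Gamma γ) *
            ((1 / Real.Gamma (1 - γ + α)) *
              (M * ((b - a) ^ α * (Real.Gamma (α - γ + 1) * Real.Gamma γ / Real.Gamma (α + 1)))))
          + (1 / Real.Gamma α) *
              (M * ((t - a) ^ (α - 1 + γ) * (Real.Gamma α * Real.Gamma γ / Real.Gamma (α + γ))))) := by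
        gcongr
    _ = ((t - a) ^ (1 - γ) * (t - a) ^ (γ - 1)) *
          (|1 / (1 + c / d)| * (1 / Real.Gamma γ) *
            ((1 / Real.Gamma (1 - γ + α)) *
              (M * ((b - a) ^ α * (Real.Gamma (α - γ + 1) * Real.Gamma γ / Real.Gamma (α + 1))))))
        + ((t - a) ^ (1 - γ) * (t - a) ^ (α - 1 + γ)) *
            ((1 / Real.Gamma α) * (M * (Real.Gamma α * Real.Gamma γ / Real.Gamma (α + γ)))) := by
        ring
    _ = |1 / (1 + c / d)| * (b - a) ^ α / Real.Gamma (α + 1) * M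
        + (t - a) ^ α * (Real.Gamma γ / Real.Gamma (α + γ) * M) := by
        rw [key1, key2, show Real.Gamma (1 - γ + α) = Real.Gamma (α - γ + 1) by ring_nf]
        field_simp
    _ ≤ |1 / (1 + c / d)| * (b - a) ^ α / Real.Gamma (α + 1) * M
        + (b - a) ^ α * (Real.Gamma γ / Real.Gamma (α + γ) * M) := by
        gcongr
    _ = (|1 / (1 + c / d)| * (b - a) ^ α / Real.Gamma (α + 1) +
          Real.Gamma γ * (b - a) ^ α / Real.Gamma (α + γ)) * M := by
        ring
end

section
/- Fix real numbers a < b, α ∈ (0,1), β ∈ [0,1], and set γ = α + β(1−α). Let f : (a,b]×ℝ → ℝ be such that t ↦ f(t, z(t)) belongs to C_{1−γ}[a,b] for every z ∈ C_{1−γ}[a,b], let c, d ∈ ℝ with d ≠ 0 and 1 + c/d ≠ 0, and assume (H4): there exists L > 0 such that |f(t, u) − f(t, v)| ≤ L|u − v| for all t ∈ (a,b] and all u, v ∈ ℝ. Define the operator T₁ on C_{1−γ}[a,b] by (T₁z)(t) = −(1/(1+c/d))·((t−a)^{γ−1}/Γ(γ))·(1/Γ(1−γ+α)) ∫_a^b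 (b−s)^{α−γ} f(s, z(s)) ds. Then for all z, w ∈ C_{1−γ}[a,b], ‖T₁z − T₁w‖_{C_{1−γ}} ≤ |1/(1+c/d)|·((b−a)^α/Γ(α+1))·L·‖z − w‖_{C_{1−γ}}; in particular, if |1/(1+c/d)|·(b−a)^α·L/Γ(α+1) < 1, then T₁ is a contraction on C_{1−γ}[a,b]. -/
open MeasureTheory intervalIntegral Set

lemma beta01 {u v : ℝ} (hu : 0 < u) (hv : 0 < v) :
    ∫ x in (0:ℝ)..1, x ^ (u - 1) * (1 - x) ^ (v - 1) =
      Real.Gamma u * Real.Gamma v / Real.Gamma (u + v) := by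
  have h := Complex.Gamma_mul_Gamma_eq_betaIntegral (s := (u:ℂ)) (t := (v:ℂ))
      (by simpa using hu) (by simpa using hv)
  have hbeta : Complex.betaIntegral (u:ℂ) (v:ℂ) =
      ((∫ x in (0:ℝ)..1, x ^ (u - 1) * (1 - x) ^ (v - 1) : ℝ) : ℂ) := by
    rw [Complex.betaIntegral, ← intervalIntegral.integral_ofReal]
    refine intervalIntegral.integral_congr fun x hx => ?_
    rw [Set.uIcc_of_le (by norm_num : (0:ℝ) ≤ 1)] at hx
    rw [Complex.ofReal_mul, Complex.ofReal_cpow hx.1, Complex.ofReal_cpow (by linarith [hx.2])]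
    push_cast
    ring
  rw [hbeta, ← Complex.ofReal_add, Complex.Gamma_ofReal, Complex.Gamma_ofReal,
    Complex.Gamma_ofReal, ← Complex.ofReal_mul, ← Complex.ofReal_mul] at h
  have h2 := Complex.ofReal_inj.mp h
  have hΓ : Real.Gamma (u + v) ≠ 0 := (Real.Gamma_pos_of_pos (by linarith)).ne'
  field_simp
  linarith [h2]

lemma beta_ab {a b p q : ℝ} (hab : a < b) (hp : 0 < p) (hq : 0 < q) :
    ∫ s in a..b, (b - s) ^ (p - 1) * (s - a) ^ (q - 1) =
      (b - a) ^ (p + q - 1) * (Real.Gamma p * Real.Gamma q / Real.Gamma (p + q)) := by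
  have hba : 0 < b - a := sub_pos.mpr hab
  have hcomp := intervalIntegral.integral_comp_mul_add (a := 0) (b := 1)
    (fun s => (b - s) ^ (p - 1) * (s - a) ^ (q - 1)) hba.ne' a
  simp only [mul_zero, zero_add, mul_one] at hcomp
  rw [show b - a + a = b by ring] at hcomp
  have hcongr : (∫ x in (0:ℝ)..1, (b - ((b - a) * x + a)) ^ (p - 1) * ((b - a) * x + a - a) ^ (q - 1))
      = ((b - a) ^ (p - 1) * (b - a) ^ (q - 1)) *
        ∫ x in (0:ℝ)..1, x ^ (q - 1) * (1 - x) ^ (p - 1) := by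
    rw [← intervalIntegral.integral_const_mul]
    refine intervalIntegral.integral_congr fun x hx => ?_
    rw [Set.uIcc_of_le (by norm_num : (0:ℝ) ≤ 1)] at hx
    rw [show b - ((b - a) * x + a) = (b - a) * (1 - x) by ring,
      show (b - a) * x + a - a = (b - a) * x by ring,
      Real.mul_rpow hba.le (by linarith [hx.2]), Real.mul_rpow hba.le hx.1]
    ring
  rw [hcongr, beta01 hq hp] at hcomp
  have hrw : (b - a) ^ (p + q - 1) = (b - a) * ((b - a) ^ (p - 1) * (b - a) ^ (q - 1)) := by
    rw [show p + q - 1 = 1 + (p - 1) + (q - 1) by ring, Real.rpow_add hba, Real.rpow_add hba,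
      Real.rpow_one]; ring
  have := congrArg (fun x : ℝ => (b - a) * x) hcomp
  simp only [smul_eq_mul, ← mul_assoc, mul_inv_cancel₀ hba.ne', one_mul] at this
  rw [← this, hrw, show q + p = p + q by ring]
  ring

lemma kernel_integrable {a b p q : ℝ} (hab : a < b) (hp : -1 < p) (hq : -1 < q) :
    IntervalIntegrable (fun s => (b - s) ^ p * (s - a) ^ q) volume a b := by
  set m := (a + b) / 2 with hm
  have ham : a < m := by rw [hm]; linarith
  have hmb : m < b := by rw [hm]; linarith
  have left : IntervalIntegrable (fun s => (b - s) ^ p * (s - a) ^ q) volume a m := by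
    have h1 : IntervalIntegrable (fun s => (s - a) ^ q) volume a m := by
      have := (intervalIntegrable_rpow' (a := a - a) (b := m - a) hq).comp_sub_right a
      simpa using this
    have h2 : ContinuousOn (fun s => (b - s) ^ p) (Set.uIcc a m) := by
      refine ContinuousOn.rpow_const (by fun_prop) fun x hx => Or.inl ?_
      rw [Set.uIcc_of_le ham.le] at hx
      have : x ≤ m := hx.2
      intro hc
      have : b = x := by linarith [sub_eq_zero.mp hc]
      linarith
    exact h1.continuousOn_mul h2
  have right : IntervalIntegrable (fun s => (b - s) ^ p * (s - a) ^ q) volume m b := by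
    have h1 : IntervalIntegrable (fun s => (b - s) ^ p) volume m b := by
      have := (intervalIntegrable_rpow' (a := b - m) (b := b - b) hp).comp_sub_left b
      simpa using this
    have h2 : ContinuousOn (fun s => (s - a) ^ q) (Set.uIcc m b) := by
      refine ContinuousOn.rpow_const (by fun_prop) fun x hx => Or.inl ?_
      rw [Set.uIcc_of_le hmb.le] at hx
      have : m ≤ x := hx.1
      intro hc
      have : x = a := by linarith [sub_eq_zero.mp hc]
      linarith
    exact h1.mul_continuousOn h2
  exact left.trans right



/-- The operator `T₁` from the Krasnosel'skii splitting `T = T₁ + T₂`: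
`(T₁z)(t) = −(1/(1+c/d))·((t−a)^{γ−1}/Γ(γ))·(1/Γ(1−γ+α))
  ∫_a^b (b−s)^{α−γ} f(s,z(s)) ds`. -/
noncomputable def hilferT1 (a b α γ c d : ℝ) (f : ℝ → ℝ → ℝ) (z : ℝ → ℝ) (t : ℝ) : ℝ :=
  -(1 / (1 + c / d)) * ((t - a) ^ (γ - 1) / Real.Gamma γ) *
    ((1 / Real.Gamma (1 - γ + α)) * ∫ s in a..b, (b - s) ^ (α - γ) * f s (z s))

/-- **`T₁` is a contraction (Stage 2 of Theorem 3.4).**  Fix `a < b`,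
`α ∈ (0,1)`, `β ∈ [0,1]`, `γ = α + β(1−α)`.  Under the Lipschitz hypothesis
(H4), for all `z, w ∈ C_{1−γ}[a,b]`,
`‖T₁z − T₁w‖_{C_{1−γ}} ≤ |1/(1+c/d)|((b−a)^α/Γ(α+1)) L ‖z − w‖_{C_{1−γ}}`;
in particular, if `|1/(1+c/d)|(b−a)^α L/Γ(α+1) < 1`, then `T₁` is a
contraction on `C_{1−γ}[a,b]`. -/
theorem T1_contraction (a b α β γ : ℝ) (hab : a < b)
    (hα0 : 0 < α) (hα1 : α < 1) (hβ0 : 0 ≤ β) (hβ1 : β ≤ 1)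
    (hγ : γ = α + β * (1 - α))
    (f : ℝ → ℝ → ℝ)
    (hf : ∀ z : ℝ → ℝ, memCw a b (1 - γ) z → memCw a b (1 - γ) (fun t => f t (z t)))
    (c d : ℝ) (hd : d ≠ 0) (hcd : 1 + c / d ≠ 0)
    (L : ℝ) (hL : 0 < L)
    (hH4 : ∀ t ∈ Set.Ioc a b, ∀ u v : ℝ, |f t u - f t v| ≤ L * |u - v|) :
    (∀ z w : ℝ → ℝ, memCw a b (1 - γ) z → memCw a b (1 - γ) w →
      wnorm a b (1 - γ)
          (fun t => hilferT1 a b α γ c d f z t - hilferT1 a b α γ c d f w t) ≤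
        |1 / (1 + c / d)| * ((b - a) ^ α / Real.Gamma (α + 1)) * L *
          wnorm a b (1 - γ) (fun t => z t - w t)) ∧
    (|1 / (1 + c / d)| * (b - a) ^ α * L / Real.Gamma (α + 1) < 1 →
      ∃ k : ℝ, 0 ≤ k ∧ k < 1 ∧
        ∀ z w : ℝ → ℝ, memCw a b (1 - γ) z → memCw a b (1 - γ) w →
          wnorm a b (1 - γ)
              (fun t => hilferT1 a b α γ c d f z t - hilferT1 a b α γ c d f w t) ≤
            k * wnorm a b (1 - γ) (fun t => z t - w t)) := by
  have hba : 0 < b - a := sub_pos.mpr hab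
  have hγα : α ≤ γ := by nlinarith
  have hγ1 : γ ≤ 1 := by nlinarith
  have hγ0 : 0 < γ := lt_of_lt_of_le hα0 hγα
  have hA0 : 0 < 1 - γ + α := by linarith
  have hΓγ : 0 < Real.Gamma γ := Real.Gamma_pos_of_pos hγ0
  have hΓA : 0 < Real.Gamma (1 - γ + α) := Real.Gamma_pos_of_pos hA0
  have hΓα1 : 0 < Real.Gamma (α + 1) := Real.Gamma_pos_of_pos (by linarith)
  have hker : IntervalIntegrable (fun s => (b - s) ^ (α - γ) * (s - a) ^ (γ - 1)) volume a b :=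
    kernel_integrable hab (by linarith) (by linarith)
  have hval : (∫ s in a..b, (b - s) ^ (α - γ) * (s - a) ^ (γ - 1))
      = (b - a) ^ α * (Real.Gamma (1 - γ + α) * Real.Gamma γ / Real.Gamma (α + 1)) := by
    have h := beta_ab hab hA0 hγ0
    rw [show 1 - γ + α - 1 = α - γ by ring, show 1 - γ + α + γ - 1 = α by ring,
      show 1 - γ + α + γ = α + 1 by ring] at h
    exact h
  have main : ∀ z w : ℝ → ℝ, memCw a b (1 - γ) z → memCw a b (1 - γ) w →
      wnorm a b (1 - γ)
          (fun t => hilferT1 a b α γ c d f z t - hilferT1 a b α γ c d f w t) ≤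
        |1 / (1 + c / d)| * ((b - a) ^ α / Real.Gamma (α + 1)) * L *
          wnorm a b (1 - γ) (fun t => z t - w t) := by
    intro z w hz hw
    obtain ⟨Gz, hGzc, hGz⟩ := id hz
    obtain ⟨Gw, hGwc, hGw⟩ := id hw
    set N := wnorm a b (1 - γ) (fun t => z t - w t) with hNdef
    have hNset : wnorm a b (1 - γ) (fun t => z t - w t)
        = sSup ((fun t => (t - a) ^ (1 - γ) * |z t - w t|) '' Set.Ioc a b) := rfl
    have hbdd : BddAbove ((fun t => (t - a) ^ (1 - γ) * |z t - w t|) '' Set.Ioc a b) := by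
      refine BddAbove.mono ?_
        ((isCompact_Icc.image_of_continuousOn ((hGzc.sub hGwc).abs)).bddAbove)
      rintro x ⟨t, ht, rfl⟩
      refine ⟨t, Set.Ioc_subset_Icc_self ht, ?_⟩
      have hta : (0:ℝ) ≤ t - a := by linarith [ht.1]
      dsimp only
      rw [Pi.sub_apply, hGz t ht, hGw t ht, ← mul_sub, abs_mul, abs_of_nonneg (Real.rpow_nonneg hta _)]
    have hN0 : 0 ≤ N := by
      rw [hNdef, hNset]
      apply Real.sSup_nonneg
      rintro x ⟨t, ht, rfl⟩
      have hta : (0:ℝ) ≤ t - a := by linarith [ht.1]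
      exact mul_nonneg (Real.rpow_nonneg hta _) (abs_nonneg _)
    have hzw : ∀ s ∈ Set.Ioc a b, |z s - w s| ≤ (s - a) ^ (γ - 1) * N := by
      intro s hs
      have hsa : 0 < s - a := by linarith [hs.1]
      have h1 : (s - a) ^ (1 - γ) * |z s - w s| ≤ N := by
        rw [hNdef, hNset]
        exact le_csSup hbdd ⟨s, hs, rfl⟩
      have h2 := mul_le_mul_of_nonneg_left h1 (Real.rpow_nonneg hsa.le (γ - 1))
      calc |z s - w s| = (s - a) ^ (γ - 1) * ((s - a) ^ (1 - γ) * |z s - w s|) := by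
            rw [← mul_assoc, ← Real.rpow_add hsa, show γ - 1 + (1 - γ) = 0 by ring,
              Real.rpow_zero, one_mul]
        _ ≤ (s - a) ^ (γ - 1) * N := h2
    have hint : ∀ u : ℝ → ℝ, memCw a b (1 - γ) (fun t => f t (u t)) →
        IntervalIntegrable (fun s => (b - s) ^ (α - γ) * f s (u s)) volume a b := by
      rintro u ⟨G, hGc, hG⟩
      have h1 : IntervalIntegrable (fun s => (b - s) ^ (α - γ) * (s - a) ^ (γ - 1) * G s)
          volume a b := hker.mul_continuousOn (by rw [Set.uIcc_of_le hab.le]; exact hGc)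
      rw [intervalIntegrable_iff] at h1 ⊢
      refine h1.congr_fun ?_ measurableSet_uIoc
      intro s hs
      rw [Set.uIoc_of_le hab.le] at hs
      have hsa : 0 < s - a := by linarith [hs.1]
      dsimp only
      rw [hG s hs, show (b - s) ^ (α - γ) * (s - a) ^ (γ - 1) * ((s - a) ^ (1 - γ) * f s (u s))
          = (b - s) ^ (α - γ) * ((s - a) ^ (γ - 1) * (s - a) ^ (1 - γ)) * f s (u s) from by ring,
        ← Real.rpow_add hsa, show γ - 1 + (1 - γ) = 0 by ring, Real.rpow_zero, mul_one]
    have hIz := hint z (hf z hz)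
    have hIw := hint w (hf w hw)
    have hsub : (∫ s in a..b, (b - s) ^ (α - γ) * f s (z s)) -
        (∫ s in a..b, (b - s) ^ (α - γ) * f s (w s)) =
        ∫ s in a..b, (b - s) ^ (α - γ) * (f s (z s) - f s (w s)) := by
      rw [← intervalIntegral.integral_sub hIz hIw]
      exact intervalIntegral.integral_congr fun x _ => by ring
    have hIbound : |∫ s in a..b, (b - s) ^ (α - γ) * (f s (z s) - f s (w s))|
        ≤ (b - a) ^ α * (Real.Gamma (1 - γ + α) * Real.Gamma γ / Real.Gamma (α + 1))
            * (L * N) := by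
      have hg : IntervalIntegrable (fun s => (b - s) ^ (α - γ) * (s - a) ^ (γ - 1) * (L * N))
          volume a b := hker.mul_const _
      have hae : ∀ᵐ s ∂(volume.restrict (Set.uIoc a b)),
          ‖(b - s) ^ (α - γ) * (f s (z s) - f s (w s))‖ ≤
          (b - s) ^ (α - γ) * (s - a) ^ (γ - 1) * (L * N) := by
        rw [Set.uIoc_of_le hab.le]
        refine (ae_restrict_iff' measurableSet_Ioc).mpr (Filter.Eventually.of_forall ?_)
        intro s hs
        have hbs : (0:ℝ) ≤ b - s := by linarith [hs.2]
        rw [Real.norm_eq_abs, abs_mul, abs_of_nonneg (Real.rpow_nonneg hbs _)]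
        calc (b - s) ^ (α - γ) * |f s (z s) - f s (w s)|
            ≤ (b - s) ^ (α - γ) * (L * |z s - w s|) :=
              mul_le_mul_of_nonneg_left (hH4 s hs _ _) (Real.rpow_nonneg hbs _)
          _ ≤ (b - s) ^ (α - γ) * (L * ((s - a) ^ (γ - 1) * N)) :=
              mul_le_mul_of_nonneg_left (mul_le_mul_of_nonneg_left (hzw s hs) hL.le)
                (Real.rpow_nonneg hbs _)
          _ = (b - s) ^ (α - γ) * (s - a) ^ (γ - 1) * (L * N) := by ring
      have h := intervalIntegral.norm_integral_le_abs_of_norm_le hae hg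
      rw [Real.norm_eq_abs] at h
      refine h.trans (le_of_eq ?_)
      rw [intervalIntegral.integral_mul_const, hval, abs_of_nonneg
        (mul_nonneg (mul_nonneg (Real.rpow_nonneg hba.le _)
          (div_nonneg (mul_nonneg hΓA.le hΓγ.le) hΓα1.le)) (mul_nonneg hL.le hN0))]
    have hRHS0 : 0 ≤ |1 / (1 + c / d)| * ((b - a) ^ α / Real.Gamma (α + 1)) * L * N :=
      mul_nonneg (mul_nonneg (mul_nonneg (abs_nonneg _)
        (div_nonneg (Real.rpow_nonneg hba.le _) hΓα1.le)) hL.le) hN0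
    rw [show wnorm a b (1 - γ)
          (fun t => hilferT1 a b α γ c d f z t - hilferT1 a b α γ c d f w t)
        = sSup ((fun t => (t - a) ^ (1 - γ) *
            |hilferT1 a b α γ c d f z t - hilferT1 a b α γ c d f w t|) '' Set.Ioc a b)
        from rfl]
    refine Real.sSup_le ?_ hRHS0
    rintro x ⟨t, ht, rfl⟩
    have hta : 0 < t - a := by linarith [ht.1]
    dsimp only
    have hD : hilferT1 a b α γ c d f z t - hilferT1 a b α γ c d f w t
        = -(1 / (1 + c / d)) * ((t - a) ^ (γ - 1) / Real.Gamma γ) *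
          ((1 / Real.Gamma (1 - γ + α)) *
            ∫ s in a..b, (b - s) ^ (α - γ) * (f s (z s) - f s (w s))) := by
      rw [← hsub]; unfold hilferT1; ring
    set I := ∫ s in a..b, (b - s) ^ (α - γ) * (f s (z s) - f s (w s)) with hI
    have habs : |hilferT1 a b α γ c d f z t - hilferT1 a b α γ c d f w t|
        = |1 / (1 + c / d)| * ((t - a) ^ (γ - 1) / Real.Gamma γ) *
          ((1 / Real.Gamma (1 - γ + α)) * |I|) := by
      rw [hD, abs_mul, abs_mul, abs_mul, abs_neg,
        abs_of_nonneg (div_nonneg (Real.rpow_nonneg hta.le _) hΓγ.le),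
        abs_of_nonneg (one_div_nonneg.mpr hΓA.le)]
    calc (t - a) ^ (1 - γ) * |hilferT1 a b α γ c d f z t - hilferT1 a b α γ c d f w t|
        = |1 / (1 + c / d)| / (Real.Gamma γ * Real.Gamma (1 - γ + α)) * |I| := by
          rw [habs, show (t - a) ^ (1 - γ) * (|1 / (1 + c / d)| *
              ((t - a) ^ (γ - 1) / Real.Gamma γ) * (1 / Real.Gamma (1 - γ + α) * |I|))
            = ((t - a) ^ (1 - γ) * (t - a) ^ (γ - 1)) *
              (|1 / (1 + c / d)| / (Real.Gamma γ * Real.Gamma (1 - γ + α)) * |I|) from by ring,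
            ← Real.rpow_add hta, show 1 - γ + (γ - 1) = 0 by ring, Real.rpow_zero, one_mul]
      _ ≤ |1 / (1 + c / d)| / (Real.Gamma γ * Real.Gamma (1 - γ + α)) *
            ((b - a) ^ α * (Real.Gamma (1 - γ + α) * Real.Gamma γ / Real.Gamma (α + 1))
              * (L * N)) :=
          mul_le_mul_of_nonneg_left hIbound
            (div_nonneg (abs_nonneg _) (mul_nonneg hΓγ.le hΓA.le))
      _ = |1 / (1 + c / d)| * ((b - a) ^ α / Real.Gamma (α + 1)) * L * N := by
          field_simp
  refine ⟨main, fun hsmall => ⟨|1 / (1 + c / d)| * (b - a) ^ α * L / Real.Gamma (α + 1),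
    div_nonneg (mul_nonneg (mul_nonneg (abs_nonneg _) (Real.rpow_nonneg hba.le _)) hL.le)
      hΓα1.le,
    hsmall, fun z w hz hw => (main z w hz hw).trans_eq (by ring)⟩⟩
end
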